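/- Let Λ = 𝒪[[T]] for 𝒪 a complete DVR, let M be a finitely generated torsion Λ-module with no nonzero finite submodule and characteristic ideal (ξ), let N be a finitely generated Λ-module with Fitt_Λ(N) ⊆ (ξ), and let Θ : M ↠ N be a surjection. Then Θ is an isomorphism. -/

import Mathlib

/-- The 0-th Fitting ideal of an `A`-module `M`: generated by the `n × n` minors
(determinants of square matrices of relations) of any presentation `A^n ↠ M`. -/
noncomputable def fittingIdeal (A : Type*) [CommRing A] (M : Type*) [AddCommGroup M]
    [Module A M] : Ideal A :=
  ⨆ (n : ℕ) (f : (Fin n → A) →ₗ[A] M) (_ : Function.Surjective f),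
    Ideal.span {d : A | ∃ X : Matrix (Fin n) (Fin n) A, (∀ i, f (X i) = 0) ∧ X.det = d}

section Aux

open scoped Matrix

variable {A : Type*} [CommRing A] {M N : Type*} [AddCommGroup M] [Module A M]
  [AddCommGroup N] [Module A N]

theorem det_mem_fittingIdeal {n : ℕ} (f : (Fin n → A) →ₗ[A] M)
    (hf : Function.Surjective f) (X : Matrix (Fin n) (Fin n) A)
    (hX : ∀ i, f (X i) = 0) : X.det ∈ fittingIdeal A M := by
  have h1 : X.det ∈ Ideal.span
      {d : A | ∃ Y : Matrix (Fin n) (Fin n) A, (∀ i, f (Y i) = 0) ∧ Y.det = d} :=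
    Ideal.subset_span ⟨X, hX, rfl⟩
  have h2 : Ideal.span
      {d : A | ∃ Y : Matrix (Fin n) (Fin n) A, (∀ i, f (Y i) = 0) ∧ Y.det = d} ≤
      fittingIdeal A M :=
    le_iSup_of_le n (le_iSup_of_le f (le_iSup_of_le hf le_rfl))
  exact h2 h1

/-- Key lemma: if `ξ ≠ 0`, `Fitt(N) ⊆ (ξ)`, `Θ : M ↠ N`, `d` is the determinant of a
relations matrix for a presentation `f` of `M`, and `q` is a vector (for an arbitrary
linear map `F : A^m → M`) with `Θ (F q) = 0`, then `d • q = ξ • r` for some `r ∈ ker F`. -/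
theorem key [IsDomain A] (Θ : M →ₗ[A] N) (hΘ : Function.Surjective Θ)
    (ξ : A) (hξ : ξ ≠ 0) (hN : fittingIdeal A N ≤ Ideal.span {ξ})
    {n : ℕ} (f : (Fin n → A) →ₗ[A] M) (hf : Function.Surjective f)
    (X : Matrix (Fin n) (Fin n) A) (hX : ∀ i, f (X i) = 0)
    {m : ℕ} (F : (Fin m → A) →ₗ[A] M) (q : Fin m → A) (hq : Θ (F q) = 0) :
    ∃ r : Fin m → A, F r = 0 ∧ X.det • q = ξ • r := by
  classical
  -- lifts of the negatives of the images of basis vectors of `A^m` through `f`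
  choose w hw using fun i : Fin m => hf (-(F (Pi.single i 1)))
  -- the combined presentation on `A^m ⊕ A^n`
  set G : ((Fin m ⊕ Fin n) → A) →ₗ[A] M :=
    F.comp (LinearMap.funLeft A A Sum.inl) + f.comp (LinearMap.funLeft A A Sum.inr) with hG
  have hGapply : ∀ v : (Fin m ⊕ Fin n) → A, G v = F (v ∘ Sum.inl) + f (v ∘ Sum.inr) :=
    fun v => rfl
  -- the combined relations matrix
  set Y : Matrix (Fin m ⊕ Fin n) (Fin m ⊕ Fin n) A :=
    Matrix.fromBlocks 1 (Matrix.of w) 0 X with hY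
  have hYrow : ∀ i, G (Y i) = 0 := by
    rintro (i | j)
    · have h1 : (Y (Sum.inl i)) ∘ Sum.inl = Pi.single i 1 := by
        funext j
        simp [hY, Matrix.one_apply, Pi.single_apply, eq_comm]
      have h2 : (Y (Sum.inl i)) ∘ Sum.inr = w i := by
        funext j; simp [hY]
      rw [hGapply, h1, h2, hw i]; abel
    · have h1 : (Y (Sum.inr j)) ∘ Sum.inl = 0 := by
        funext i; simp [hY]
      have h2 : (Y (Sum.inr j)) ∘ Sum.inr = X j := by
        funext i; simp [hY]
      rw [hGapply, h1, h2, map_zero, hX j]; abel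
  have hdetY : Y.det = X.det := by
    rw [hY, Matrix.det_fromBlocks_zero₂₁, Matrix.det_one, one_mul]
  -- the extended vector
  set q' : (Fin m ⊕ Fin n) → A := Sum.elim q 0 with hq'
  have hGq' : G q' = F q := by
    rw [hGapply]
    have h1 : q' ∘ Sum.inl = q := rfl
    have h2 : q' ∘ Sum.inr = (0 : Fin n → A) := rfl
    rw [h1, h2, map_zero, add_zero]
  -- row-replacement determinants lie in Fitt(N) ⊆ (ξ)
  have hrepl : ∀ i, (Y.updateRow i q').det ∈ Ideal.span {ξ} := by
    intro i
    refine hN ?_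
    -- transport along `finSumFinEquiv` to a `Fin (m + n)`-indexed presentation
    set e : (Fin m ⊕ Fin n) ≃ Fin (m + n) := finSumFinEquiv with he
    set h : (Fin (m + n) → A) →ₗ[A] N :=
      (Θ.comp G).comp (LinearMap.funLeft A A e) with hh
    have hhapply : ∀ v : Fin (m + n) → A, h v = Θ (G (v ∘ e)) := fun v => rfl
    have hhsurj : Function.Surjective h := by
      intro y
      obtain ⟨x, hx⟩ := hΘ y
      obtain ⟨u, hu⟩ := hf x
      refine ⟨(Sum.elim (0 : Fin m → A) u) ∘ e.symm, ?_⟩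
      rw [hhapply]
      have h0 : ((Sum.elim (0 : Fin m → A) u) ∘ e.symm) ∘ e = Sum.elim (0 : Fin m → A) u := by
        funext t; simp
      rw [h0, hGapply]
      have h1 : (Sum.elim (0 : Fin m → A) u) ∘ Sum.inl = 0 := rfl
      have h2 : (Sum.elim (0 : Fin m → A) u) ∘ Sum.inr = u := rfl
      rw [h1, h2, map_zero, zero_add, hu, hx]
    have hrowszero : ∀ t, Θ (G ((Y.updateRow i q') t)) = 0 := by
      intro t
      by_cases ht : t = i
      · subst ht
        rw [Matrix.updateRow_self, hGq', hq]
      · rw [Matrix.updateRow_ne ht, hYrow t, map_zero]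
    have hrows : ∀ t, h (((Matrix.reindex e e) (Y.updateRow i q')) t) = 0 := by
      intro t
      rw [hhapply]
      have h0 : (((Matrix.reindex e e) (Y.updateRow i q')) t) ∘ e
          = (Y.updateRow i q') (e.symm t) := by
        funext s; simp [Matrix.reindex_apply, Matrix.submatrix_apply]
      rw [h0, hrowszero]
    have hdet := det_mem_fittingIdeal h hhsurj ((Matrix.reindex e e) (Y.updateRow i q')) hrows
    rwa [Matrix.det_reindex_self] at hdet
  -- extract the divisibility
  choose a ha using fun i => (Ideal.mem_span_singleton').mp (hrepl i)
  -- Cramer's rule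
  have hcramer : Yᵀ *ᵥ (Matrix.cramer Yᵀ q') = Yᵀ.det • q' := Matrix.mulVec_cramer Yᵀ q'
  have hcramer_apply : ∀ i, Matrix.cramer Yᵀ q' i = (Y.updateRow i q').det := by
    intro i
    rw [Matrix.cramer_apply, Matrix.updateCol_transpose, Matrix.det_transpose]
  set r' : (Fin m ⊕ Fin n) → A := fun t => ∑ i, a i * Y i t with hr'
  have hmain : ∀ t, Y.det * q' t = ξ * r' t := by
    intro t
    have h1 : (Yᵀ *ᵥ (Matrix.cramer Yᵀ q')) t = Yᵀ.det • q' t := congrFun hcramer t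
    have h2 : (Yᵀ *ᵥ (Matrix.cramer Yᵀ q')) t = ∑ i, (Y.updateRow i q').det * Y i t := by
      simp only [Matrix.mulVec, dotProduct, Matrix.transpose_apply]
      refine Finset.sum_congr rfl fun i _ => ?_
      rw [hcramer_apply i, mul_comm]
    rw [h2] at h1
    have h3 : ∑ i, (Y.updateRow i q').det * Y i t = ξ * r' t := by
      rw [hr', Finset.mul_sum]
      refine Finset.sum_congr rfl fun i _ => ?_
      rw [← ha i]
      ring
    rw [h3] at h1
    rw [smul_eq_mul, Matrix.det_transpose] at h1
    exact h1.symm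
  -- the second-block components of `r'` vanish
  have hr'inr : ∀ j, r' (Sum.inr j) = 0 := by
    intro j
    have hmj := hmain (Sum.inr j)
    have hq0 : q' (Sum.inr j) = 0 := rfl
    rw [hq0, mul_zero] at hmj
    exact (mul_eq_zero.mp hmj.symm).resolve_left hξ
  have hr'sum : r' = ∑ i, a i • Y i := by
    funext t
    rw [hr']
    simp [Finset.sum_apply]
  have hGr' : G r' = 0 := by
    rw [hr'sum, map_sum]
    simp only [map_smul, hYrow, smul_zero]
    exact Finset.sum_const_zero
  refine ⟨r' ∘ Sum.inl, ?_, ?_⟩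
  · have h0 : f (r' ∘ Sum.inr) = 0 := by
      have hz : r' ∘ Sum.inr = (0 : Fin n → A) := funext hr'inr
      rw [hz, map_zero]
    have hGr := hGapply r'
    rw [hGr', h0, add_zero] at hGr
    exact hGr.symm
  · funext t
    have hmt := hmain (Sum.inl t)
    rw [hdetY] at hmt
    have hql : q' (Sum.inl t) = q t := rfl
    rw [hql] at hmt
    simpa using hmt

theorem xi_ne_zero [IsDomain A] [Module.Finite A M] (htors : Module.IsTorsion A M)
    (ξ : A) (hchar : fittingIdeal A M = Ideal.span {ξ}) : ξ ≠ 0 := by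
  classical
  have hne := Submodule.annihilator_top_inter_nonZeroDivisors htors
  obtain ⟨r, hr_ann, hr_nzd⟩ := hne
  have hrM : ∀ x : M, r • x = 0 := fun x =>
    Submodule.mem_annihilator.mp hr_ann x Submodule.mem_top
  obtain ⟨k, F, hF⟩ := Module.Finite.exists_fin' A M
  set X : Matrix (Fin k) (Fin k) A := r • (1 : Matrix (Fin k) (Fin k) A) with hXdef
  have hXrows : ∀ i, F (X i) = 0 := by
    intro i
    have h0 : X i = r • ((1 : Matrix (Fin k) (Fin k) A) i) := by
      funext j; simp [hXdef]
    rw [h0, map_smul, hrM]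
  have hdet : X.det = r ^ k := by
    rw [hXdef, Matrix.det_smul, Matrix.det_one, mul_one, Fintype.card_fin]
  have hmem : r ^ k ∈ Ideal.span {ξ} := by
    rw [← hchar, ← hdet]
    exact det_mem_fittingIdeal F hF X hXrows
  intro hξ0
  rw [hξ0, Ideal.span_singleton_eq_bot.mpr rfl, Ideal.mem_bot] at hmem
  exact pow_ne_zero k (nonZeroDivisors.ne_zero hr_nzd) hmem


theorem main_engine [IsDomain A] [Module.Finite A M]
    (htors : Module.IsTorsion A M) (ξ : A)
    (hchar : fittingIdeal A M = Ideal.span {ξ})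
    (hN : fittingIdeal A N ≤ Ideal.span {ξ})
    (Θ : M →ₗ[A] N) (hΘ : Function.Surjective Θ) :
    Function.Bijective Θ := by
  have hξ : ξ ≠ 0 := xi_ne_zero htors ξ hchar
  -- the ideal of elements `z` such that `z • q` is divisible by `ξ` "within relations"
  let I : Ideal A :=
    { carrier := {z | ∀ (m : ℕ) (F : (Fin m → A) →ₗ[A] M) (q : Fin m → A),
        Θ (F q) = 0 → ∃ r : Fin m → A, F r = 0 ∧ z • q = ξ • r}
      zero_mem' := fun m F q _ => ⟨0, map_zero F, by rw [zero_smul, smul_zero]⟩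
      add_mem' := by
        intro z₁ z₂ h₁ h₂ m F q hq
        obtain ⟨r₁, hr₁, e₁⟩ := h₁ m F q hq
        obtain ⟨r₂, hr₂, e₂⟩ := h₂ m F q hq
        exact ⟨r₁ + r₂, by rw [map_add, hr₁, hr₂, add_zero],
          by rw [add_smul, e₁, e₂, ← smul_add]⟩
      smul_mem' := by
        intro c z hz m F q hq
        obtain ⟨r, hr, e⟩ := hz m F q hq
        refine ⟨c • r, by rw [map_smul, hr, smul_zero], ?_⟩
        rw [smul_eq_mul, mul_smul, e, smul_comm] }
  have hle : fittingIdeal A M ≤ I := by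
    refine iSup_le fun n => iSup_le fun f => iSup_le fun hf => Ideal.span_le.mpr ?_
    rintro d ⟨X, hX, rfl⟩
    intro m F q hq
    exact key Θ hΘ ξ hξ hN f hf X hX F q hq
  have hξI : ξ ∈ I := hle (hchar ▸ Ideal.mem_span_singleton_self ξ)
  refine ⟨?_, hΘ⟩
  intro x y hxy
  obtain ⟨m, F, hF⟩ := Module.Finite.exists_fin' A M
  obtain ⟨q, hq⟩ := hF (x - y)
  have hq0 : Θ (F q) = 0 := by rw [hq, map_sub, hxy, sub_self]
  obtain ⟨r, hr, e⟩ := hξI m F q hq0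
  have hqr : q = r := smul_right_injective (Fin m → A) hξ e
  have hxy0 : x - y = 0 := by rw [← hq, hqr, hr]
  exact sub_eq_zero.mp hxy0

end Aux

set_option maxHeartbeats 1000000 in
/-- Over `Λ = 𝒪[[T]]` with `𝒪` a complete DVR: if `M` is a finitely generated torsion
`Λ`-module with no nonzero finite submodule and characteristic ideal `(ξ)` (for such `M`
the characteristic ideal coincides with the Fitting ideal, so we state
`Fitt_Λ(M) = (ξ)`), and `N` is a finitely generated `Λ`-module with `Fitt_Λ(N) ⊆ (ξ)`,
then any surjection `Θ : M ↠ N` is an isomorphism. -/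
theorem surjective_to_bijective (O : Type*) [CommRing O] [IsDomain O]
    [IsDiscreteValuationRing O] [IsAdicComplete (IsLocalRing.maximalIdeal O) O]
    (M N : Type*) [AddCommGroup M] [Module (PowerSeries O) M]
    [Module.Finite (PowerSeries O) M]
    [AddCommGroup N] [Module (PowerSeries O) N] [Module.Finite (PowerSeries O) N]
    (htors : Module.IsTorsion (PowerSeries O) M)
    (hnofin : ∀ P : Submodule (PowerSeries O) M, (P : Set M).Finite → P = ⊥)
    (ξ : PowerSeries O)
    (hchar : fittingIdeal (PowerSeries O) M = Ideal.span {ξ})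
    (hN : fittingIdeal (PowerSeries O) N ≤ Ideal.span {ξ})
    (Θ : M →ₗ[PowerSeries O] N) (hΘ : Function.Surjective Θ) :
    Function.Bijective Θ := by
  exact main_engine htors ξ hchar hN Θ hΘ
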